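/- arXiv:1004.3692 — 4 statements merged into one kernel-verified Lean document; each statement's English description precedes it below -/
import Mathlib

section
/- Let S_n = Y_1 + ... + Y_n where Y_i = B_i X_i are independent random variables, each X_i has distribution Q_i on ℕ = {1,2,...}, and each B_i ~ Bernoulli(p_i) with p_i ∈ (0,1) is independent of X_i. Let λ = Σ_{i=1}^n p_i. Then J_{𝐐,1}(S_n) ≤ (1/λ) · Σ_{i=1}^n p_i³/(1 − p_i). -/
open scoped BigOperators Classical ENNReal

noncomputable section

/-- Point mass at `0`. -/
def delta0 : ℕ → ℝ := fun x => if x = 0 then 1 else 0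

/-- Convolution of two distributions on `ℕ`. -/
def dconv (P R : ℕ → ℝ) : ℕ → ℝ := fun x => ∑ j ∈ Finset.range (x + 1), P j * R (x - j)

/-- `k`-fold convolution power of `Q` (with `Q^{*0} = δ₀`). -/
def dconvPow (Q : ℕ → ℝ) : ℕ → ℕ → ℝ
  | 0 => delta0
  | k + 1 => dconv (dconvPow Q k) Q

/-- Compound distribution `C_Q R`: the law of `X_1 + ... + X_Y` where `Y ~ R` and the
`X_i` are i.i.d. with law `Q`, independent of `Y`. -/
def dcompound (Q R : ℕ → ℝ) : ℕ → ℝ := fun x => ∑' k, R k * dconvPow Q k x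

/-- Poisson(λ) pmf. -/
def poissonPmf (l : ℝ) : ℕ → ℝ := fun k => Real.exp (-l) * l ^ k / (Nat.factorial k : ℝ)

/-- Compound Poisson distribution `CPo(λ, Q)`. -/
def cpo (l : ℝ) (Q : ℕ → ℝ) : ℕ → ℝ := dcompound Q (poissonPmf l)

/-- Bernoulli(p) pmf on `ℕ`. -/
def bern (p : ℝ) : ℕ → ℝ := fun k => if k = 0 then 1 - p else if k = 1 then p else 0

/-- Compound Bernoulli distribution `C_Q Bern(p)`, i.e. the law of `B·X` with
`B ~ Bern(p)` independent of `X ~ Q` (where `Q` is supported on `{1,2,...}`). -/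
def cbern (p : ℝ) (Q : ℕ → ℝ) : ℕ → ℝ := fun x => if x = 0 then 1 - p else p * Q x

/-- Distribution of the sum of `n` independent random variables with laws `P i`. -/
def sumDist : (n : ℕ) → (Fin n → ℕ → ℝ) → ℕ → ℝ
  | 0, _ => delta0
  | n + 1, P => dconv (sumDist n fun i => P i.castSucc) (P (Fin.last n))

/-- `P` is a probability distribution on `ℤ≥0 = {0,1,2,...}`. -/
def IsDist (P : ℕ → ℝ) : Prop := (∀ x, 0 ≤ P x) ∧ (∑' x : ℕ, P x) = 1

/-- `Q` is a probability distribution on `ℕ = {1,2,...}`. -/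
def IsDistN (Q : ℕ → ℝ) : Prop := IsDist Q ∧ Q 0 = 0

/-- Relative entropy `D(P‖R)`. -/
def relEnt (P R : ℕ → ℝ) : ℝ := ∑' x, P x * Real.log (P x / R x)

/-- Total variation distance. -/
def dTV (P R : ℕ → ℝ) : ℝ := (1 / 2) * ∑' x, |P x - R x|

/-- Mean of a distribution on `ℕ`. -/
def pmean (P : ℕ → ℝ) : ℝ := ∑' x : ℕ, (x : ℝ) * P x

/-- Size-biased distribution `R^#`. -/
def sizeBias (R : ℕ → ℝ) : ℕ → ℝ := fun y => ((y : ℝ) + 1) * R (y + 1) / pmean R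

/-- The Stein factor `H(λ, Q)`. -/
def steinFactor (l : ℝ) (Q : ℕ → ℝ) : ℝ :=
  if ∀ j : ℕ, 1 ≤ j → ((j : ℝ) + 1) * Q (j + 1) ≤ (j : ℝ) * Q j then
    if 1 ≤ (l * (Q 1 - 2 * Q 2))⁻¹ then 1
    else Real.sqrt (l * (Q 1 - 2 * Q 2))⁻¹ * (2 - Real.sqrt (l * (Q 1 - 2 * Q 2))⁻¹)
  else Real.exp l * min 1 (l * Q 1)⁻¹

/-- Distribution of the leave-one-out sum `∑_{j ≠ i} Y_j`. -/
def looDist (n : ℕ) (P : Fin n → ℕ → ℝ) (i : Fin n) : ℕ → ℝ :=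
  sumDist n (Function.update P i delta0)

/-- Size-biased score `r₁(s; P, 𝐐)` of a sum, where `Pmod i = P^{(i)}` is the law of the
sum with the `i`-th summand replaced by an independent `Y_i' ~ C_{Q_i}(R_i^#)`. -/
def score1 (n : ℕ) (p : Fin n → ℝ) (P : ℕ → ℝ) (Pmod : Fin n → ℕ → ℝ) (s : ℕ) : ℝ :=
  (∑ i : Fin n, p i * Pmod i s) / ((∑ i : Fin n, p i) * P s) - 1

/-- Size-biased information `J_{𝐐,1}(S) = λ E[r₁(S; P, 𝐐)²]`. -/
def J1 (n : ℕ) (p : Fin n → ℝ) (P : ℕ → ℝ) (Pmod : Fin n → ℕ → ℝ) : ℝ :=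
  (∑ i : Fin n, p i) * ∑' s, P s * (score1 n p P Pmod s) ^ 2

/-- Size-biased score of a single summand `Y ~ P = C_Q R`, where `Pmod = C_Q (R^#)`. -/
def score1s (P Pmod : ℕ → ℝ) (x : ℕ) : ℝ := Pmod x / P x - 1

/-- Size-biased information of a single summand: `J_{Q,1}(Y) = p E[r₁(Y; P, Q)²]`. -/
def J1s (p : ℝ) (P Pmod : ℕ → ℝ) : ℝ := p * ∑' x, P x * (score1s P Pmod x) ^ 2

/-- Katti-Panjer score `r₂(y; P, Q)` with parameter `λ`. -/
def score2 (l : ℝ) (Q P : ℕ → ℝ) (y : ℕ) : ℝ :=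
  l * (∑ j ∈ Finset.range (y + 1), (j : ℝ) * Q j * P (y - j)) / P y - (y : ℝ)

/-- Katti-Panjer information `J_{Q,2}(Y) = E[r₂(Y; P, Q)²]`. -/
def J2 (l : ℝ) (Q P : ℕ → ℝ) : ℝ := ∑' y, P y * (score2 l Q P y) ^ 2

/-- Dissimilarity measure `D(𝐐) = ∑_{j≥1} ∑_i (j pᵢ / q) |Qᵢ(j) − Q(j)|`. -/
def dissim (n : ℕ) (p : Fin n → ℝ) (Qs : Fin n → ℕ → ℝ) (Q : ℕ → ℝ) (q : ℝ) : ℝ :=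
  ∑' j : ℕ, ∑ i : Fin n, (j : ℝ) * p i / q * |Qs i j - Q j|

/-!
Write `Rᵢ = C_{Qᵢ} Bern(pᵢ)`. The size-biased Bernoulli law is `δ₀`, so `P^{(i)}` is the law
of the sum without its `i`-th summand, and `λ P(s) r₁(s) = ∑ᵢ Tᵢ(s)`, where `Tᵢ` is the law of
`S` with `Rᵢ` replaced by the signed measure `bᵢ = pᵢ (δ₀ − Rᵢ)` of total mass zero. Thus
`J_{𝐐,1}(S) = λ⁻¹ χ²(∑ᵢ Tᵢ, P)` with `χ²(a, F) = ∑ₓ a(x)² / F(x)`.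

For perturbations `a`, `b` of distributions `F`, `G` with `∑ a = 0`, Cauchy–Schwarz on each
convolution sum gives `χ²(a * G + F * b, F * G) ≤ χ²(a, F) + χ²(b, G)`: the cross term
`2 (∑ a)(∑ b)` vanishes. Induction on `n` bounds `χ²(∑ᵢ Tᵢ, P)` by
`∑ᵢ χ²(bᵢ, Rᵢ) = ∑ᵢ pᵢ³ / (1 − pᵢ)`.
-/

open Finset Function

lemma IsDist.summable {P : ℕ → ℝ} (hP : IsDist P) : Summable P := by
  by_contra h
  exact zero_ne_one (tsum_eq_zero_of_not_summable h ▸ hP.2)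

lemma IsDist.summable_abs {P : ℕ → ℝ} (hP : IsDist P) : Summable fun x => |P x| :=
  hP.summable.abs

lemma IsDist.smul_add_smul {P R : ℕ → ℝ} (hP : IsDist P) (hR : IsDist R) {t : ℝ} (ht0 : 0 ≤ t)
    (ht1 : t ≤ 1) : IsDist ((1 - t) • P + t • R) := by
  refine ⟨fun x => add_nonneg (mul_nonneg (sub_nonneg.2 ht1) (hP.1 x)) (mul_nonneg ht0 (hR.1 x)),
    ?_⟩
  change ∑' x, ((1 - t) * P x + t * R x) = 1
  rw [(hP.summable.mul_left _).tsum_add (hR.summable.mul_left _), tsum_mul_left, tsum_mul_left,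
    hP.2, hR.2]
  ring

lemma isDist_delta0 : IsDist delta0 :=
  ⟨fun x => by unfold delta0; positivity, by rw [tsum_eq_single 0] <;> simp [delta0]⟩

section dconv

variable {f g F G : ℕ → ℝ}

lemma dconv_nonneg (hf : ∀ x, 0 ≤ f x) (hg : ∀ x, 0 ≤ g x) (x : ℕ) : 0 ≤ dconv f g x :=
  sum_nonneg fun j _ => mul_nonneg (hf j) (hg _)

lemma abs_dconv_le (hf : ∀ x, |f x| ≤ F x) (hg : ∀ x, |g x| ≤ G x) (x : ℕ) :
    |dconv f g x| ≤ dconv F G x :=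
  (abs_sum_le_sum_abs _ _).trans <| sum_le_sum fun j _ => by
    rw [abs_mul]; exact mul_le_mul (hf j) (hg _) (abs_nonneg _) ((abs_nonneg _).trans (hf j))

lemma summable_abs_dconv (hf : Summable fun x => |f x|) (hg : Summable fun x => |g x|) :
    Summable fun x => |dconv f g x| :=
  summable_norm_sum_mul_range_of_summable_norm (f := f) (g := g) hf hg

lemma tsum_dconv (hf : Summable fun x => |f x|) (hg : Summable fun x => |g x|) :
    ∑' x, dconv f g x = (∑' x, f x) * ∑' x, g x :=
  (tsum_mul_tsum_eq_tsum_sum_range_of_summable_norm (f := f) (g := g) hf hg).symm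

lemma IsDist.dconv (hF : IsDist F) (hG : IsDist G) : IsDist (dconv F G) :=
  ⟨dconv_nonneg hF.1 hG.1, by rw [tsum_dconv hF.summable_abs hG.summable_abs, hF.2, hG.2, one_mul]⟩

lemma dconv_delta0 (f : ℕ → ℝ) : dconv f delta0 = f := by
  ext x
  rw [dconv, sum_eq_single x]
  · simp [delta0]
  · intro j hj hjx
    simp only [mem_range] at hj
    simp [delta0, show x - j ≠ 0 by omega]
  · simp

lemma dconv_smul_add_smul_left (c d : ℝ) (f₁ f₂ g : ℕ → ℝ) :
    dconv (c • f₁ + d • f₂) g = c • dconv f₁ g + d • dconv f₂ g := by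
  ext x
  simp only [dconv, Pi.add_apply, Pi.smul_apply, smul_eq_mul, mul_sum, ← sum_add_distrib]
  exact sum_congr rfl fun j _ => by ring

lemma dconv_smul_add_smul_right (c d : ℝ) (f g₁ g₂ : ℕ → ℝ) :
    dconv f (c • g₁ + d • g₂) = c • dconv f g₁ + d • dconv f g₂ := by
  ext x
  simp only [dconv, Pi.add_apply, Pi.smul_apply, smul_eq_mul, mul_sum, ← sum_add_distrib]
  exact sum_congr rfl fun j _ => by ring

lemma dconv_sum_left {ι : Type*} (s : Finset ι) (f : ι → ℕ → ℝ) (g : ℕ → ℝ) :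
    dconv (∑ i ∈ s, f i) g = ∑ i ∈ s, dconv (f i) g := by
  ext x
  simp only [dconv, Finset.sum_apply, sum_mul]
  exact sum_comm

end dconv

section sumDist

lemma IsDist.sumDist : ∀ {n : ℕ} {P : Fin n → ℕ → ℝ}, (∀ i, IsDist (P i)) → IsDist (sumDist n P)
  | 0, _, _ => isDist_delta0
  | _ + 1, _, hP => (IsDist.sumDist fun _ => hP _).dconv (hP _)

lemma abs_sumDist_le : ∀ {n : ℕ} {f F : Fin n → ℕ → ℝ}, (∀ i x, |f i x| ≤ F i x) →
    ∀ x, |sumDist n f x| ≤ sumDist n F x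
  | 0, _, _, _, x => (abs_of_nonneg (isDist_delta0.1 x)).le
  | _ + 1, _, _, h, x => abs_dconv_le (abs_sumDist_le fun _ => h _) (h _) x

lemma summable_abs_sumDist : ∀ {n : ℕ} {f : Fin n → ℕ → ℝ}, (∀ i, Summable fun x => |f i x|) →
    Summable fun x => |sumDist n f x|
  | 0, _, _ => isDist_delta0.summable_abs
  | _ + 1, _, hf => summable_abs_dconv (summable_abs_sumDist fun _ => hf _) (hf _)

lemma tsum_sumDist : ∀ {n : ℕ} {f : Fin n → ℕ → ℝ}, (∀ i, Summable fun x => |f i x|) →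
    ∑' x, sumDist n f x = ∏ i, ∑' x, f i x
  | 0, _, _ => isDist_delta0.2
  | n + 1, f, hf => by
    rw [sumDist, tsum_dconv (summable_abs_sumDist fun _ => hf _) (hf _),
      tsum_sumDist fun _ => hf _, Fin.prod_univ_castSucc]

variable {n : ℕ} (P : Fin (n + 1) → ℕ → ℝ) (f : ℕ → ℝ)

lemma sumDist_succ_update_castSucc (k : Fin n) :
    sumDist (n + 1) (update P k.castSucc f)
      = dconv (sumDist n (update (fun j => P j.castSucc) k f)) (P (Fin.last n)) := by
  rw [sumDist, update_of_ne (Fin.castSucc_lt_last k).ne']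
  congr 2
  exact update_comp_eq_of_injective' P (Fin.castSucc_injective n) k f

lemma sumDist_succ_update_last :
    sumDist (n + 1) (update P (Fin.last n) f) = dconv (sumDist n fun j => P j.castSucc) f := by
  rw [sumDist, update_self]
  congr 2
  exact update_comp_eq_of_forall_ne P f fun j => (Fin.castSucc_lt_last j).ne

end sumDist

lemma sumDist_update_smul_add_smul : ∀ {n : ℕ} (P : Fin n → ℕ → ℝ) (i : Fin n) (c d : ℝ)
    (f g : ℕ → ℝ), sumDist n (update P i (c • f + d • g))
      = c • sumDist n (update P i f) + d • sumDist n (update P i g)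
  | 0, _, i, _, _, _, _ => i.elim0
  | n + 1, P, i, c, d, f, g => by
    induction i using Fin.lastCases with
    | last => simp only [sumDist_succ_update_last, dconv_smul_add_smul_right]
    | cast k =>
      simp only [sumDist_succ_update_castSucc, sumDist_update_smul_add_smul _ k c d f g,
        dconv_smul_add_smul_left]

lemma sumDist_update_smul_sub {n : ℕ} (P : Fin n → ℕ → ℝ) (i : Fin n) (c : ℝ) (f : ℕ → ℝ) :
    sumDist n (update P i (c • (f - P i))) = c • sumDist n (update P i f) - c • sumDist n P := by
  rw [smul_sub, sub_eq_add_neg, ← neg_smul, sumDist_update_smul_add_smul, update_eq_self,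
    neg_smul, ← sub_eq_add_neg]

lemma sumDist_update_smul {n : ℕ} (P : Fin n → ℕ → ℝ) (i : Fin n) (c : ℝ) (f : ℕ → ℝ) :
    sumDist n (update P i (c • f)) = c • sumDist n (update P i f) := by
  simpa using sumDist_update_smul_add_smul P i c 0 f f

lemma abs_sumDist_update_le {n : ℕ} {P : Fin n → ℕ → ℝ} (hP : ∀ j x, 0 ≤ P j x) {i : Fin n}
    {g : ℕ → ℝ} {C : ℝ} (hg : ∀ x, |g x| ≤ C * P i x) (x : ℕ) :
    |sumDist n (update P i g) x| ≤ C * sumDist n P x := by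
  have hle : ∀ j y, |update P i g j y| ≤ update P i (C • P i) j y := by
    intro j y
    rcases eq_or_ne j i with rfl | hj
    · simpa using hg y
    · simp [update_of_ne hj, abs_of_nonneg (hP j y)]
  simpa [sumDist_update_smul] using abs_sumDist_le hle x

lemma tsum_sumDist_update_eq_zero {n : ℕ} {P : Fin n → ℕ → ℝ} (hP : ∀ j, IsDist (P j))
    {i : Fin n} {g : ℕ → ℝ} (hg : Summable fun x => |g x|) (hg0 : ∑' x, g x = 0) :
    ∑' x, sumDist n (update P i g) x = 0 := by
  have hsum : ∀ j, Summable fun x => |update P i g j x| := by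
    intro j
    rcases eq_or_ne j i with rfl | hj
    · simpa using hg
    · simpa [update_of_ne hj] using (hP j).summable_abs
  rw [tsum_sumDist hsum]
  exact prod_eq_zero (mem_univ i) (by simpa using hg0)

/-- Terms with `F x = 0` contribute `0`; all perturbations `a` below vanish there. -/
def chiSq (a F : ℕ → ℝ) : ℝ := ∑' x, a x ^ 2 / F x

lemma eq_zero_of_abs_le_mul_of_eq_zero {a f C : ℝ} (h : |a| ≤ C * f) (hf : f = 0) : a = 0 :=
  abs_nonpos_iff.mp (by simpa [hf] using h)

lemma sq_div_le_of_abs_le_mul {a f C : ℝ} (hf : 0 ≤ f) (h : |a| ≤ C * f) :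
    a ^ 2 / f ≤ C ^ 2 * f := by
  rcases hf.eq_or_lt with hf0 | hf0
  · simp [← hf0]
  rw [div_le_iff₀ hf0, ← sq_abs]
  calc |a| ^ 2 ≤ (C * f) ^ 2 := pow_le_pow_left₀ (abs_nonneg a) h 2
    _ = C ^ 2 * f * f := by ring

lemma summable_sq_div_of_abs_le_mul {a F : ℕ → ℝ} {C : ℝ} (hF : IsDist F)
    (ha : ∀ x, |a x| ≤ C * F x) : Summable fun x => a x ^ 2 / F x :=
  (hF.summable.mul_left (C ^ 2)).of_nonneg_of_le (fun x => div_nonneg (sq_nonneg _) (hF.1 x))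
    fun x => sq_div_le_of_abs_le_mul (hF.1 x) (ha x)

lemma summable_abs_of_abs_le_mul {a F : ℕ → ℝ} {C : ℝ} (hF : Summable F)
    (ha : ∀ x, |a x| ≤ C * F x) : Summable fun x => |a x| :=
  (hF.mul_left C).of_nonneg_of_le (fun _ => abs_nonneg _) ha

/-- Cauchy–Schwarz on one convolution sum; `u` and `v` are the scores of the perturbations
`F * u` and `G * v`. -/
lemma sq_dconv_add_div_le {F G : ℕ → ℝ} (hF : ∀ x, 0 ≤ F x) (hG : ∀ x, 0 ≤ G x)
    (u v : ℕ → ℝ) (s : ℕ) :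
    (dconv (F * u) G s + dconv F (G * v) s) ^ 2 / dconv F G s
      ≤ dconv (F * u ^ 2) G s + dconv F (G * v ^ 2) s + 2 * dconv (F * u) (G * v) s := by
  have hw : ∀ j, 0 ≤ F j * G (s - j) := fun j => mul_nonneg (hF j) (hG _)
  have hnum : dconv (F * u) G s + dconv F (G * v) s
      = ∑ j ∈ range (s + 1), F j * G (s - j) * (u j + v (s - j)) := by
    simp only [dconv, Pi.mul_apply, ← sum_add_distrib]
    exact sum_congr rfl fun j _ => by ring
  have hrhs : dconv (F * u ^ 2) G s + dconv F (G * v ^ 2) s + 2 * dconv (F * u) (G * v) s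
      = ∑ j ∈ range (s + 1), F j * G (s - j) * (u j + v (s - j)) ^ 2 := by
    simp only [dconv, Pi.mul_apply, Pi.pow_apply, mul_sum, ← sum_add_distrib]
    exact sum_congr rfl fun j _ => by ring
  rw [hnum, hrhs]
  refine div_le_of_le_mul₀ (dconv_nonneg hF hG s)
    (sum_nonneg fun j _ => mul_nonneg (hw j) (sq_nonneg _)) ?_
  rw [mul_comm]
  exact sum_sq_le_sum_mul_sum_of_sq_le_mul _ (fun j _ => hw j)
    (fun j _ => mul_nonneg (hw j) (sq_nonneg _)) fun j _ => (by ring : _ = _).le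

lemma chiSq_dconv_add_le {F G a b : ℕ → ℝ} {Ca Cb : ℝ} (hF : IsDist F) (hG : IsDist G)
    (ha : ∀ x, |a x| ≤ Ca * F x) (hb : ∀ x, |b x| ≤ Cb * G x) (ha0 : ∑' x, a x = 0) :
    chiSq (dconv a G + dconv F b) (dconv F G)
      ≤ chiSq a F + chiSq b G := by
  have hau : F * (a / F) = a :=
    funext fun x => mul_div_cancel_of_imp' (eq_zero_of_abs_le_mul_of_eq_zero (ha x))
  have hbv : G * (b / G) = b :=
    funext fun x => mul_div_cancel_of_imp' (eq_zero_of_abs_le_mul_of_eq_zero (hb x))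
  have hsq : ∀ f H : ℕ → ℝ, H * (f / H) ^ 2 = fun x => f x ^ 2 / H x := by
    intro f H; ext x
    rcases eq_or_ne (H x) 0 with hx | hx
    · simp [hx]
    · simp only [Pi.mul_apply, Pi.pow_apply, Pi.div_apply]; field_simp
  have haS := summable_abs_of_abs_le_mul hF.summable ha
  have hbS := summable_abs_of_abs_le_mul hG.summable hb
  have ha2 := summable_sq_div_of_abs_le_mul hF ha
  have hb2 := summable_sq_div_of_abs_le_mul hG hb
  set W : ℕ → ℝ := fun s => dconv (fun x => a x ^ 2 / F x) G s
    + dconv F (fun y => b y ^ 2 / G y) s + 2 * dconv a b s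
  have hle : ∀ s, (dconv a G s + dconv F b s) ^ 2 / dconv F G s ≤ W s := by
    intro s
    simpa only [hau, hbv, hsq] using sq_dconv_add_div_le hF.1 hG.1 (a / F) (b / G) s
  have hW1 := summable_abs_dconv ha2.abs hG.summable_abs
  have hW2 := summable_abs_dconv hF.summable_abs hb2.abs
  have hW3 := summable_abs_dconv haS hbS
  have hWS : Summable W := (hW1.of_abs.add hW2.of_abs).add (hW3.of_abs.mul_left 2)
  calc chiSq (dconv a G + dconv F b) (dconv F G) ≤ ∑' s, W s :=
        (hWS.of_nonneg_of_le (fun s => div_nonneg (sq_nonneg _) (dconv_nonneg hF.1 hG.1 s))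
          hle).tsum_le_tsum hle hWS
    _ = chiSq a F + chiSq b G := by
      rw [(hW1.of_abs.add hW2.of_abs).tsum_add (hW3.of_abs.mul_left 2),
        hW1.of_abs.tsum_add hW2.of_abs, tsum_mul_left, tsum_dconv ha2.abs hG.summable_abs,
        tsum_dconv hF.summable_abs hb2.abs, tsum_dconv haS hbS, ha0, hF.2, hG.2]
      simp [chiSq]

theorem chiSq_sum_sumDist_update_le : ∀ {n : ℕ} {P b : Fin n → ℕ → ℝ} {C : Fin n → ℝ},
    (∀ i, IsDist (P i)) → (∀ i x, |b i x| ≤ C i * P i x) → (∀ i, ∑' x, b i x = 0) →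
    chiSq (∑ i, sumDist n (update P i (b i))) (sumDist n P) ≤ ∑ i, chiSq (b i) (P i)
  | 0, _, _, _, _, _, _ => by simp [chiSq]
  | n + 1, P, b, C, hP, hb, hb0 => by
    set F := sumDist n fun j => P j.castSucc
    set a := ∑ j : Fin n, sumDist n (update (fun j => P j.castSucc) j (b j.castSucc))
    have hF : IsDist F := IsDist.sumDist fun _ => hP _
    have ha : ∀ x, |a x| ≤ (∑ j : Fin n, C j.castSucc) * F x := by
      intro x
      simp only [a, Finset.sum_apply, sum_mul]
      exact (abs_sum_le_sum_abs _ _).trans <| sum_le_sum fun j _ =>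
        abs_sumDist_update_le (fun _ => (hP _).1) (hb _) x
    have ha0 : ∑' x, a x = 0 := by
      simp only [a, Finset.sum_apply]
      rw [Summable.tsum_finsetSum fun j _ => (summable_abs_of_abs_le_mul hF.summable
        (abs_sumDist_update_le (fun _ => (hP _).1) (hb _))).of_abs]
      exact sum_eq_zero fun j _ => tsum_sumDist_update_eq_zero (fun _ => hP _)
        (summable_abs_of_abs_le_mul (hP _).summable (hb _)) (hb0 _)
    have hsplit : ∑ i, sumDist (n + 1) (update P i (b i))
        = dconv a (P (Fin.last n)) + dconv F (b (Fin.last n)) := by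
      rw [Fin.sum_univ_castSucc, sumDist_succ_update_last, dconv_sum_left]
      simp only [sumDist_succ_update_castSucc]
      rfl
    calc chiSq (∑ i, sumDist (n + 1) (update P i (b i))) (sumDist (n + 1) P)
        = chiSq (dconv a (P (Fin.last n)) + dconv F (b (Fin.last n)))
            (dconv F (P (Fin.last n))) := by rw [hsplit]; rfl
      _ ≤ chiSq a F + chiSq (b (Fin.last n)) (P (Fin.last n)) :=
        chiSq_dconv_add_le hF (hP _) ha (hb _) ha0
      _ ≤ ∑ j : Fin n, chiSq (b j.castSucc) (P j.castSucc)
            + chiSq (b (Fin.last n)) (P (Fin.last n)) :=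
        add_le_add_left (chiSq_sum_sumDist_update_le (fun _ => hP _) (fun _ => hb _)
          fun _ => hb0 _) _
      _ = ∑ i, chiSq (b i) (P i) := (Fin.sum_univ_castSucc fun i => chiSq (b i) (P i)).symm

lemma pmean_bern (p : ℝ) : pmean (bern p) = p := by
  rw [pmean, tsum_eq_single 1]
  · simp [bern]
  · rintro (_ | _ | k) hk <;> simp_all [bern]

lemma sizeBias_bern {p : ℝ} (hp : p ≠ 0) : sizeBias (bern p) = delta0 := by
  ext (_ | y) <;> simp [sizeBias, pmean_bern, bern, delta0, hp]

lemma dcompound_delta0 (Q : ℕ → ℝ) : dcompound Q delta0 = delta0 := by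
  ext x
  rw [dcompound, tsum_eq_single 0]
  · simp [delta0, dconvPow]
  · intro k hk; simp [delta0, hk]

lemma dconv_dcompound_sizeBias_bern (f Q : ℕ → ℝ) {p : ℝ} (hp : p ≠ 0) :
    dconv f (dcompound Q (sizeBias (bern p))) = f := by
  rw [sizeBias_bern hp, dcompound_delta0, dconv_delta0]

section cbern

variable {p : ℝ} {Q : ℕ → ℝ}

lemma cbern_eq (hQ0 : Q 0 = 0) : cbern p Q = (1 - p) • delta0 + p • Q := by
  ext (_ | x) <;> simp [cbern, delta0, hQ0]

lemma isDist_cbern (hp0 : 0 ≤ p) (hp1 : p ≤ 1) (hQ : IsDistN Q) : IsDist (cbern p Q) :=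
  cbern_eq hQ.2 ▸ isDist_delta0.smul_add_smul hQ.1 hp0 hp1

lemma abs_smul_delta0_sub_cbern_le (hp0 : 0 ≤ p) (hp1 : p < 1) (hQ : IsDistN Q) (x : ℕ) :
    |(p • (delta0 - cbern p Q)) x| ≤ p / (1 - p) * cbern p Q x := by
  have h1p : 0 < 1 - p := sub_pos.2 hp1
  rcases x with _ | x
  · simp only [Pi.smul_apply, Pi.sub_apply, smul_eq_mul, delta0, cbern, if_true]
    rw [div_mul_cancel₀ _ h1p.ne', sub_sub_cancel, abs_of_nonneg (by positivity)]
    nlinarith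
  · have hQx := hQ.1.1 (x + 1)
    simp only [Pi.smul_apply, Pi.sub_apply, smul_eq_mul, delta0, cbern, Nat.succ_ne_zero,
      if_false, zero_sub, mul_neg, abs_neg]
    rw [abs_of_nonneg (by positivity), div_mul_eq_mul_div, le_div_iff₀ h1p]
    nlinarith [mul_nonneg (mul_nonneg hp0 hp0) hQx]

lemma tsum_smul_delta0_sub_cbern (hp0 : 0 ≤ p) (hp1 : p ≤ 1) (hQ : IsDistN Q) :
    ∑' x, (p • (delta0 - cbern p Q)) x = 0 := by
  have hcb := isDist_cbern hp0 hp1 hQ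
  simp only [Pi.smul_apply, Pi.sub_apply, smul_eq_mul, tsum_mul_left]
  rw [isDist_delta0.summable.tsum_sub hcb.summable, isDist_delta0.2, hcb.2, sub_self, mul_zero]

lemma chiSq_smul_delta0_sub_cbern (hp1 : p < 1) (hQ : IsDistN Q) :
    chiSq (p • (delta0 - cbern p Q)) (cbern p Q) = p ^ 3 / (1 - p) := by
  have h1p : 1 - p ≠ 0 := (sub_pos.2 hp1).ne'
  have hterm : ∀ x, (p • (delta0 - cbern p Q)) x ^ 2 / cbern p Q x
      = p ^ 4 / (1 - p) * delta0 x + p ^ 3 * Q x := by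
    rintro (_ | x)
    · simp [delta0, cbern, hQ.2]
      field_simp
    · have hc : ∀ c : ℝ, (p * c) ^ 2 / c = p ^ 2 * c := fun c => by
        rcases eq_or_ne c 0 with hc | hc
        · simp [hc]
        · field_simp
      simp only [Pi.smul_apply, Pi.sub_apply, smul_eq_mul, delta0, cbern, Nat.succ_ne_zero,
        if_false, zero_sub, mul_neg, neg_sq, hc]
      ring
  rw [chiSq, tsum_congr hterm, (isDist_delta0.summable.mul_left _).tsum_add
    (hQ.1.summable.mul_left _), tsum_mul_left, tsum_mul_left, isDist_delta0.2, hQ.1.2]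
  field_simp
  ring

end cbern

lemma mul_mul_div_mul_sub_one_sq (l x A : ℝ) :
    l * (x * (A / (l * x) - 1) ^ 2) = 1 / l * ((A - l * x) ^ 2 / x) := by
  rcases eq_or_ne l 0 with rfl | hl
  · simp
  rcases eq_or_ne x 0 with rfl | hx
  · simp
  field_simp

/-- **Corollary 4.2.** For a sum of independent compound Bernoulli random variables
`Y_i = B_i X_i`, the size-biased information satisfies
`J_{𝐐,1}(S_n) ≤ (1/λ) ∑ i p_i³/(1−p_i)`. -/
theorem J1_sum_cbern_le
    (n : ℕ) (p : Fin n → ℝ) (hp : ∀ i, 0 < p i ∧ p i < 1)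
    (Qs : Fin n → ℕ → ℝ) (hQs : ∀ i, IsDistN (Qs i))
    (lam : ℝ) (hlam : lam = ∑ i : Fin n, p i)
    (P : ℕ → ℝ) (hP : P = sumDist n fun i => cbern (p i) (Qs i))
    (Pmod : Fin n → ℕ → ℝ)
    (hPmod : Pmod = fun i =>
      dconv (looDist n (fun j => cbern (p j) (Qs j)) i)
        (dcompound (Qs i) (sizeBias (bern (p i))))) :
    J1 n p P Pmod ≤ (1 / lam) * ∑ i : Fin n, (p i) ^ 3 / (1 - p i) := by
  subst hlam hP hPmod
  set R : Fin n → ℕ → ℝ := fun i => cbern (p i) (Qs i)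
  have hR : ∀ i, IsDist (R i) := fun i => isDist_cbern (hp i).1.le (hp i).2.le (hQs i)
  have hnum : ∀ s, ∑ i, p i * sumDist n (update R i delta0) s - (∑ i, p i) * sumDist n R s
      = (∑ i, sumDist n (update R i (p i • (delta0 - R i)))) s := fun s => by
    simp only [Finset.sum_apply, sumDist_update_smul_sub, Pi.sub_apply, Pi.smul_apply,
      smul_eq_mul, sum_sub_distrib, sum_mul]
  calc J1 n p (sumDist n R)
        (fun i => dconv (looDist n R i) (dcompound (Qs i) (sizeBias (bern (p i)))))
      = 1 / (∑ i, p i) * chiSq (∑ i, sumDist n (update R i (p i • (delta0 - R i))))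
          (sumDist n R) := by
        simp only [J1, score1, chiSq, dconv_dcompound_sizeBias_bern _ _ (hp _).1.ne', looDist,
          ← tsum_mul_left, mul_mul_div_mul_sub_one_sq, hnum]
    _ ≤ 1 / (∑ i, p i) * ∑ i, chiSq (p i • (delta0 - R i)) (R i) :=
        mul_le_mul_of_nonneg_left
          (chiSq_sum_sumDist_update_le hR
            (fun i => abs_smul_delta0_sub_cbern_le (hp i).1.le (hp i).2 (hQs i))
            fun i => tsum_smul_delta0_sub_cbern (hp i).1.le (hp i).2.le (hQs i))
          (one_div_nonneg.2 (sum_nonneg fun i _ => (hp i).1.le))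
    _ = 1 / (∑ i, p i) * ∑ i, p i ^ 3 / (1 - p i) := by
        simp only [R, chiSq_smul_delta0_sub_cbern (hp _).2 (hQs _)]
end
end

section
/- Let S_n = Y_1 + ... + Y_n where Y_i = B_i X_i are independent random variables, each X_i has distribution Q_i on ℕ = {1,2,...} with mean q_i and full support on ℕ, and each B_i ~ Bernoulli(p_i) with p_i ∈ (0,1) is independent of X_i, so that each Y_i ~ P_i is supported on the whole of ℤ≥0. Let λ = Σ_{i=1}^n p_i and Q = Σ_{i=1}^n (p_i/λ) Q_i. Then for every s ∈ ℤ≥0 the Katti-Panjer score satisfies the projection identity r_2(s; P_{S_n}, Q) = E[ Σ_{i=1}^n r_2(Y_i; P_i, Q_i) | S_n = s ], where P_{S_n} is the distribution of S_n and the score of S_n is taken with parameter λ while the score of Y_i is taken with parameter p_i. -/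
open scoped BigOperators Classical ENNReal

noncomputable section

/-! Pass to generating functions in `ℝ⟦X⟧`: convolution becomes multiplication, so the law
of `Sₙ` has series `∏ᵢ Pᵢ`, and weighting a law by `x` becomes `X · d/dX`. Multiplied by
`Pᵢ(x)`, the score of `Yᵢ` is `pᵢ (jQᵢ ∗ Pᵢ)(x) − x Pᵢ(x)`; convolving with the law of the
other summands and summing over `i` yields `λ (jQ ∗ P)(s)` minus the `s`-th coefficient of
`Σᵢ X Pᵢ' ∏_{k ≠ i} P_k = X (∏ᵢ Pᵢ)'`, i.e. `s P(s)`, which is `r₂(s; P, Q) P(s)`. -/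

open Finset PowerSeries

theorem Derivation.leibniz_prod {ι R A M : Type*} [CommSemiring R] [CommSemiring A]
    [AddCommMonoid M] [Algebra R A] [Module A M] [Module R M] [DecidableEq ι]
    (D : Derivation R A M) (s : Finset ι) (f : ι → A) :
    D (∏ i ∈ s, f i) = ∑ i ∈ s, (∏ j ∈ s.erase i, f j) • D (f i) := by
  induction s using Finset.induction_on with
  | empty => simp
  | insert a s ha ih =>
    have herase : ∀ i ∈ s, (insert a s).erase i = insert a (s.erase i) := fun i hi =>
      erase_insert_of_ne fun h => ha (h ▸ hi)
    rw [prod_insert ha, D.leibniz, ih, sum_insert ha, erase_insert ha, smul_sum, add_comm]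
    congr 1
    refine sum_congr rfl fun i hi => ?_
    rw [herase i hi, prod_insert fun h => ha (mem_of_mem_erase h), smul_smul]

theorem PowerSeries.coeff_X_mul_derivative {R : Type*} [CommSemiring R] (F : R⟦X⟧) (s : ℕ) :
    coeff s (X * d⁄dX R F) = s * coeff s F := by
  cases s with
  | zero => simp
  | succ s => rw [coeff_succ_X_mul, coeff_derivative, mul_comm]; push_cast; rfl

theorem mk_dconv (A B : ℕ → ℝ) : mk (dconv A B) = mk A * mk B := by
  ext n
  rw [coeff_mk, coeff_mul, Nat.sum_antidiagonal_eq_sum_range_succ_mk]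
  simp [dconv]

theorem mk_delta0 : mk delta0 = 1 := by
  ext n
  simp [delta0, coeff_one]

theorem mk_natCast_mul (A : ℕ → ℝ) : mk (fun x => (x : ℝ) * A x) = X * d⁄dX ℝ (mk A) := by
  ext s
  rw [coeff_X_mul_derivative, coeff_mk, coeff_mk]

theorem mk_sumDist (n : ℕ) (P : Fin n → ℕ → ℝ) : mk (sumDist n P) = ∏ i, mk (P i) := by
  induction n with
  | zero => exact mk_delta0
  | succ n ih => rw [Fin.prod_univ_castSucc, ← ih, sumDist, mk_dconv]

theorem mk_looDist (n : ℕ) (P : Fin n → ℕ → ℝ) (i : Fin n) :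
    mk (looDist n P i) = ∏ j ∈ univ.erase i, mk (P j) := by
  rw [looDist, mk_sumDist, ← prod_erase_mul _ _ (mem_univ i), Function.update_self, mk_delta0,
    mul_one]
  exact prod_congr rfl fun j hj => by rw [Function.update_of_ne (ne_of_mem_erase hj)]

theorem dconv_eq_coeff (A B : ℕ → ℝ) (s : ℕ) : dconv A B s = coeff s (mk A * mk B) := by
  rw [← mk_dconv, coeff_mk]

theorem dconv_assoc (A B C : ℕ → ℝ) : dconv (dconv A B) C = dconv A (dconv B C) := by
  funext s
  rw [dconv_eq_coeff, dconv_eq_coeff, mk_dconv, mk_dconv, mul_assoc]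

theorem sumDist_eq_dconv_looDist (n : ℕ) (P : Fin n → ℕ → ℝ) (i : Fin n) :
    sumDist n P = dconv (P i) (looDist n P i) := by
  funext s
  rw [dconv_eq_coeff, mk_looDist, mul_prod_erase univ (fun j => mk (P j)) (mem_univ i),
    ← mk_sumDist, coeff_mk]

theorem sum_dconv_natCast_mul_looDist (n : ℕ) (P : Fin n → ℕ → ℝ) (s : ℕ) :
    ∑ i, dconv (fun x => (x : ℝ) * P i x) (looDist n P i) s = s * sumDist n P s := by
  simp only [dconv_eq_coeff, mk_natCast_mul, mk_looDist, ← map_sum]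
  rw [← coeff_mk s (sumDist n P), ← coeff_X_mul_derivative, mk_sumDist, Derivation.leibniz_prod,
    mul_sum]
  simp only [smul_eq_mul]
  congr 1
  exact sum_congr rfl fun i _ => by ring

theorem dconv_nonneg_s9 {A B : ℕ → ℝ} (hA : ∀ x, 0 ≤ A x) (hB : ∀ x, 0 ≤ B x) (s : ℕ) :
    0 ≤ dconv A B s :=
  sum_nonneg fun j _ => mul_nonneg (hA j) (hB _)

theorem dconv_pos {A B : ℕ → ℝ} (hA : ∀ x, 0 ≤ A x) (hB : ∀ x, 0 ≤ B x) (hA0 : 0 < A 0)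
    {s : ℕ} (hBs : 0 < B s) : 0 < dconv A B s :=
  sum_pos' (fun j _ => mul_nonneg (hA j) (hB _))
    ⟨0, mem_range.2 s.succ_pos, mul_pos hA0 (by rwa [Nat.sub_zero])⟩

theorem sumDist_nonneg {n : ℕ} {P : Fin n → ℕ → ℝ} (hP : ∀ i x, 0 ≤ P i x) (s : ℕ) :
    0 ≤ sumDist n P s := by
  induction n generalizing s with
  | zero => unfold sumDist delta0; positivity
  | succ n ih => exact dconv_nonneg_s9 (ih fun i => hP i.castSucc) (hP _) s

theorem sumDist_zero (n : ℕ) (P : Fin n → ℕ → ℝ) : sumDist n P 0 = ∏ i, P i 0 := by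
  rw [← coeff_mk 0 (sumDist n P), mk_sumDist, coeff_zero_eq_constantCoeff_apply, map_prod]
  simp only [← coeff_zero_eq_constantCoeff_apply, coeff_mk]

theorem sumDist_pos {n : ℕ} (hn : 0 < n) {P : Fin n → ℕ → ℝ} (hP : ∀ i x, 0 < P i x) (s : ℕ) :
    0 < sumDist n P s := by
  obtain ⟨m, rfl⟩ := Nat.exists_eq_add_of_lt hn
  refine dconv_pos (sumDist_nonneg fun i x => (hP _ x).le) (fun x => (hP _ x).le) ?_ (hP _ s)
  rw [sumDist_zero]
  exact prod_pos fun i _ => hP _ 0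

theorem cbern_pos {p : ℝ} {Q : ℕ → ℝ} (hp : 0 < p) (hp1 : p < 1) (hQ : ∀ y, 1 ≤ y → 0 < Q y)
    (x : ℕ) : 0 < cbern p Q x := by
  unfold cbern
  split_ifs with hx
  · linarith
  · exact mul_pos hp (hQ x (Nat.one_le_iff_ne_zero.2 hx))

theorem score2_mul_self (l : ℝ) (Q P : ℕ → ℝ) {y : ℕ} (hy : P y ≠ 0) :
    score2 l Q P y * P y = l * dconv (fun j => (j : ℝ) * Q j) P y - y * P y := by
  rw [score2, sub_mul, div_mul_cancel₀ _ hy]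
  rfl

theorem sum_sum_score2_mul_looDist {n : ℕ} (l : Fin n → ℝ) (Qs P : Fin n → ℕ → ℝ) (lam : ℝ)
    (Q : ℕ → ℝ) (hmix : ∀ j, lam * Q j = ∑ i, l i * Qs i j) (s : ℕ)
    (hP : ∀ i, ∀ x ≤ s, P i x ≠ 0) :
    ∑ i, ∑ x ∈ range (s + 1), score2 (l i) (Qs i) (P i) x * (P i x * looDist n P i (s - x)) =
      lam * dconv (fun j => (j : ℝ) * Q j) (sumDist n P) s - s * sumDist n P s := by
  have hsummand : ∀ i, ∑ x ∈ range (s + 1),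
      score2 (l i) (Qs i) (P i) x * (P i x * looDist n P i (s - x)) =
        l i * dconv (fun j => (j : ℝ) * Qs i j) (sumDist n P) s -
          dconv (fun x => (x : ℝ) * P i x) (looDist n P i) s := by
    intro i
    calc _ = ∑ x ∈ range (s + 1), (l i * dconv (fun j => (j : ℝ) * Qs i j) (P i) x -
            x * P i x) * looDist n P i (s - x) :=
          sum_congr rfl fun x hx => by
            rw [← mul_assoc, score2_mul_self _ _ _ (hP i x (Nat.lt_succ_iff.1 (mem_range.1 hx)))]
      _ = l i * dconv (dconv (fun j => (j : ℝ) * Qs i j) (P i)) (looDist n P i) s -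
            dconv (fun x => (x : ℝ) * P i x) (looDist n P i) s := by
          simp only [dconv, sub_mul, sum_sub_distrib, mul_sum, sum_mul, mul_assoc]
      _ = _ := by rw [dconv_assoc, ← sumDist_eq_dconv_looDist]
  rw [sum_congr rfl fun i _ => hsummand i, sum_sub_distrib, sum_dconv_natCast_mul_looDist]
  congr 1
  simp only [dconv, mul_sum]
  rw [sum_comm]
  refine sum_congr rfl fun j _ => ?_
  rw [show lam * ((j : ℝ) * Q j * sumDist n P (s - j)) =
      (lam * Q j) * (j * sumDist n P (s - j)) by ring, hmix, sum_mul]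
  exact sum_congr rfl fun i _ => by ring

theorem score2_projection_identity_general
    (n : ℕ) (hn : 0 < n) (p : Fin n → ℝ) (hp : ∀ i, 0 < p i ∧ p i < 1)
    (Qs : Fin n → ℕ → ℝ)
    (hfull : ∀ i, ∀ y : ℕ, 1 ≤ y → 0 < Qs i y)
    (lam : ℝ) (hlam : lam = ∑ i : Fin n, p i)
    (Q : ℕ → ℝ) (hQ : Q = fun j => ∑ i : Fin n, p i / lam * Qs i j)
    (P : ℕ → ℝ) (hP : P = sumDist n fun i => cbern (p i) (Qs i)) :
    ∀ s : ℕ,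
      score2 lam Q P s =
        (∑ i : Fin n, ∑ x ∈ Finset.range (s + 1),
            score2 (p i) (Qs i) (cbern (p i) (Qs i)) x *
              (cbern (p i) (Qs i) x *
                looDist n (fun j => cbern (p j) (Qs j)) i (s - x))) / P s := by
  intro s
  have hPi : ∀ i x, 0 < cbern (p i) (Qs i) x := fun i => cbern_pos (hp i).1 (hp i).2 (hfull i)
  have hlam_ne : lam ≠ 0 :=
    hlam ▸ (sum_pos (fun i _ => (hp i).1) (univ_nonempty_iff.2 ⟨⟨0, hn⟩⟩)).ne'
  have hmix : ∀ j, lam * Q j = ∑ i, p i * Qs i j := fun j => by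
    rw [hQ, mul_sum]
    exact sum_congr rfl fun i _ => by field_simp
  have hPs : P s ≠ 0 := hP ▸ (sumDist_pos hn hPi s).ne'
  rw [sum_sum_score2_mul_looDist p Qs _ lam Q hmix s fun i x _ => (hPi i x).ne', ← hP,
    ← score2_mul_self lam Q P hPs, mul_div_cancel_right₀ _ hPs]

/-- **Proposition 4.3 (projection identity).** For a sum of independent compound
Bernoulli random variables `Y_i = B_i X_i` with full-support `Q_i`, the Katti-Panjer
score of the sum (with parameter `λ` and mixture `Q`) is the conditional expectation,
given `S_n = s`, of the sum of the Katti-Panjer scores of the summands (with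
parameters `p_i`). -/
theorem score2_projection_identity
    (n : ℕ) (hn : 0 < n) (p : Fin n → ℝ) (hp : ∀ i, 0 < p i ∧ p i < 1)
    (Qs : Fin n → ℕ → ℝ) (hQs : ∀ i, IsDistN (Qs i))
    (hfull : ∀ i, ∀ y : ℕ, 1 ≤ y → 0 < Qs i y)
    (q : Fin n → ℝ) (hQm : ∀ i, Summable fun x : ℕ => (x : ℝ) * Qs i x)
    (hq : ∀ i, pmean (Qs i) = q i)
    (lam : ℝ) (hlam : lam = ∑ i : Fin n, p i)
    (Q : ℕ → ℝ) (hQ : Q = fun j => ∑ i : Fin n, p i / lam * Qs i j)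
    (P : ℕ → ℝ) (hP : P = sumDist n fun i => cbern (p i) (Qs i)) :
    ∀ s : ℕ,
      score2 lam Q P s =
        (∑ i : Fin n, ∑ x ∈ Finset.range (s + 1),
            score2 (p i) (Qs i) (cbern (p i) (Qs i)) x *
              (cbern (p i) (Qs i) x *
                looDist n (fun j => cbern (p j) (Qs j)) i (s - x))) / P s :=
  score2_projection_identity_general n hn p hp Qs hfull lam hlam Q hQ P hP
end
end

section
/- Let Y = BX ~ P where B ~ Bernoulli(p) with p ∈ (0,1) and X ~ Q on ℕ = {1,2,...} are independent. Then D(P ‖ CPo(p,Q)) ≤ p²/(1 − p), i.e., the relative entropy is bounded by the size-biased information J_{Q,1}(Y) = p²/(1−p). -/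
open scoped BigOperators Classical ENNReal

noncomputable section

-- auxiliary lemmas

lemma my_summable_Q {Q : ℕ → ℝ} (hQ : IsDistN Q) : Summable Q := by
  by_contra h
  have := tsum_eq_zero_of_not_summable h
  rw [hQ.1.2] at this
  norm_num at this

lemma my_dconvPow_nonneg {Q : ℕ → ℝ} (hQ : ∀ x, 0 ≤ Q x) (k x : ℕ) :
    0 ≤ dconvPow Q k x := by
  induction k generalizing x with
  | zero => unfold dconvPow delta0; positivity
  | succ k ih =>
    unfold dconvPow dconv
    exact Finset.sum_nonneg fun j _ => mul_nonneg (ih j) (hQ _)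

lemma my_dconvPow_le_one {Q : ℕ → ℝ} (hQ : IsDistN Q) (k x : ℕ) :
    dconvPow Q k x ≤ 1 := by
  induction k generalizing x with
  | zero => unfold dconvPow delta0; split <;> norm_num
  | succ k ih =>
    show dconv (dconvPow Q k) Q x ≤ 1
    unfold dconv
    calc ∑ j ∈ Finset.range (x + 1), dconvPow Q k j * Q (x - j)
        ≤ ∑ j ∈ Finset.range (x + 1), Q (x - j) := by
          refine Finset.sum_le_sum fun j _ => ?_
          nlinarith [my_dconvPow_nonneg hQ.1.1 k j, ih j, hQ.1.1 (x - j)]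
      _ = ∑ j ∈ Finset.range (x + 1), Q j := by
          have := Finset.sum_range_reflect Q (x + 1)
          simpa only [Nat.add_sub_cancel] using this
      _ ≤ ∑' j, Q j := Summable.sum_le_tsum _ (fun j _ => hQ.1.1 j) (my_summable_Q hQ)
      _ = 1 := hQ.1.2

lemma my_poisson_nonneg {l : ℝ} (hl : 0 ≤ l) (k : ℕ) : 0 ≤ poissonPmf l k := by
  unfold poissonPmf; positivity

lemma my_poisson_summable (l : ℝ) : Summable (poissonPmf l) := by
  unfold poissonPmf
  simpa [mul_div_assoc] using (Real.summable_pow_div_factorial l).mul_left (Real.exp (-l))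

lemma my_cpo_summand_summable {Q : ℕ → ℝ} (hQ : IsDistN Q) {l : ℝ} (hl : 0 ≤ l) (x : ℕ) :
    Summable (fun k => poissonPmf l k * dconvPow Q k x) := by
  refine Summable.of_nonneg_of_le (fun k => ?_) (fun k => ?_) (my_poisson_summable l)
  · exact mul_nonneg (my_poisson_nonneg hl k) (my_dconvPow_nonneg hQ.1.1 k x)
  · calc poissonPmf l k * dconvPow Q k x ≤ poissonPmf l k * 1 :=
        mul_le_mul_of_nonneg_left (my_dconvPow_le_one hQ k x) (my_poisson_nonneg hl k)
      _ = poissonPmf l k := mul_one _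

lemma my_cpo_zero {Q : ℕ → ℝ} (hQ : IsDistN Q) {l : ℝ} :
    cpo l Q 0 = Real.exp (-l) := by
  unfold cpo dcompound
  rw [tsum_eq_single 0]
  · simp [poissonPmf, dconvPow, delta0]
  · intro k hk
    obtain ⟨m, rfl⟩ := Nat.exists_eq_succ_of_ne_zero hk
    have : dconvPow Q (m + 1) 0 = 0 := by
      show dconv (dconvPow Q m) Q 0 = 0
      simp [dconv, hQ.2]
    rw [this, mul_zero]

lemma my_cpo_ge {Q : ℕ → ℝ} (hQ : IsDistN Q) {l : ℝ} (hl : 0 ≤ l) (x : ℕ) :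
    Real.exp (-l) * l * Q x ≤ cpo l Q x := by
  have h1 : dconvPow Q 1 x = Q x := by
    show dconv delta0 Q x = Q x
    unfold dconv delta0
    rw [Finset.sum_eq_single 0]
    · simp
    · intro j _ hj; simp [hj]
    · intro h; simp at h
  have := Summable.le_tsum (my_cpo_summand_summable hQ hl x) 1
    (fun k _ => mul_nonneg (my_poisson_nonneg hl k) (my_dconvPow_nonneg hQ.1.1 k x))
  calc Real.exp (-l) * l * Q x = poissonPmf l 1 * dconvPow Q 1 x := by
        simp [poissonPmf, h1]
    _ ≤ _ := this

/-- **Lemma 5.4.** For a compound Bernoulli random variable `Y = BX ~ C_Q Bern(p)`,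
the relative entropy to `CPo(p,Q)` is bounded by the size-biased information
`J_{Q,1}(Y) = p²/(1−p)`. -/
theorem relEnt_cbern_le_J1s
    (p : ℝ) (hp : 0 < p ∧ p < 1) (Q : ℕ → ℝ) (hQ : IsDistN Q) :
    relEnt (cbern p Q) (cpo p Q) ≤ p ^ 2 / (1 - p) := by
  obtain ⟨hp0, hp1⟩ := hp
  have hq0 : (0:ℝ) < 1 - p := by linarith
  have hrhs : (0:ℝ) ≤ p ^ 2 / (1 - p) := by positivity
  set f : ℕ → ℝ := fun x => cbern p Q x * Real.log (cbern p Q x / cpo p Q x) with hf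
  by_cases hs : Summable f
  swap
  · unfold relEnt
    rw [tsum_eq_zero_of_not_summable hs]
    exact hrhs
  set g : ℕ → ℝ := fun x => if x = 0 then (1 - p) * (Real.log (1 - p) + p) else p ^ 2 * Q x
    with hg
  have hgs : Summable g := by
    have : g = Function.update (fun x => p ^ 2 * Q x) 0 ((1 - p) * (Real.log (1 - p) + p)) := by
      funext x
      by_cases hx : x = 0 <;> simp [hg, Function.update, hx]
    rw [this]
    exact (((my_summable_Q hQ).mul_left (p ^ 2)).update 0 _)
  have hterm : ∀ x, f x ≤ g x := by
    intro x
    by_cases hx : x = 0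
    · subst hx
      have h0 : f 0 = (1 - p) * Real.log ((1 - p) / Real.exp (-p)) := by
        simp [hf, cbern, my_cpo_zero hQ]
      have h1 : g 0 = (1 - p) * (Real.log (1 - p) + p) := by simp [hg]
      rw [h0, h1, Real.log_div (ne_of_gt hq0) (Real.exp_ne_zero _), Real.log_exp]
      apply le_of_eq
      ring
    · simp only [hf, hg, cbern, if_neg hx]
      by_cases hQx : Q x = 0
      · simp [hQx]
      · have hQxpos : 0 < Q x := lt_of_le_of_ne (hQ.1.1 x) (Ne.symm hQx)
        have hcpo : Real.exp (-p) * p * Q x ≤ cpo p Q x := my_cpo_ge hQ hp0.le x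
        have hcpopos : 0 < cpo p Q x := lt_of_lt_of_le (by positivity) hcpo
        have hlog : Real.log (p * Q x / cpo p Q x) ≤ p := by
          rw [Real.log_le_iff_le_exp (by positivity)]
          rw [div_le_iff₀ hcpopos]
          calc p * Q x = Real.exp p * (Real.exp (-p) * p * Q x) := by
                rw [show Real.exp p * (Real.exp (-p) * p * Q x)
                    = (Real.exp p * Real.exp (-p)) * (p * Q x) from by ring,
                  ← Real.exp_add]
                simp
            _ ≤ Real.exp p * cpo p Q x :=
                mul_le_mul_of_nonneg_left hcpo (Real.exp_nonneg _)
        calc p * Q x * Real.log (p * Q x / cpo p Q x) ≤ p * Q x * p :=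
              mul_le_mul_of_nonneg_left hlog (by positivity)
          _ = p ^ 2 * Q x := by ring
  have hsum_le : relEnt (cbern p Q) (cpo p Q) ≤ ∑' x, g x := by
    exact Summable.tsum_le_tsum hterm hs hgs
  have hgval : ∑' x, g x = (1 - p) * (Real.log (1 - p) + p) + p ^ 2 := by
    rw [Summable.tsum_eq_add_tsum_ite hgs 0]
    have h2 : ∑' x, (if x = 0 then 0 else g x) = p ^ 2 := by
      have : ∀ x, (if x = 0 then 0 else g x) = p ^ 2 * Q x := by
        intro x
        by_cases hx : x = 0
        · simp [hx, hQ.2]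
        · simp [hx, hg]
      rw [tsum_congr this, tsum_mul_left, hQ.1.2, mul_one]
    rw [h2]
    simp [hg]
  rw [hgval] at hsum_le
  refine le_trans hsum_le ?_
  have hlog1 : Real.log (1 - p) ≤ (1 - p) - 1 := Real.log_le_sub_one_of_pos hq0
  rw [le_div_iff₀ hq0]
  nlinarith [sq_nonneg p, mul_le_mul_of_nonneg_left hlog1 hq0.le]
end
end

section
/- Let Y ~ P be a ℤ≥0-valued random variable whose distribution P has full support on ℤ≥0, with mean λ and variance σ², and suppose E[(P(Y−1)/P(Y))²] < ∞ (with the convention P(−1) = 0). Then E[ (λ P(Y−1)/P(Y) − Y)² ] = λ² · E[ (P(Y−1)/P(Y) − 1)² ] + σ² − 2λ. That is, when Q is the point mass at 1, the Katti-Panjer information J_{Q,2}(Y) equals λ² I(Y) + (σ² − 2λ), where I(Y) = E[ (P(Y−1)/P(Y) − 1)² ] is the Johnstone–MacGibbon discrete Fisher information. -/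
/-! With `s(y) = P(y-1)/P(y)`, expand both squares. Besides `E[s²]`, the only moments that
occur are `E[s] = ∑ P(y-1) = 1`, `E[Y s] = ∑ y P(y-1) = E[Y + 1] = λ + 1` and
`E[Y²] = σ² + λ²`, so `E[(λ s - Y)²] = λ² E[s²] - 2λ(λ + 1) + σ² + λ²` and
`E[(s - 1)²] = E[s²] - 1`; the two sides then agree. -/

open scoped BigOperators Classical ENNReal

noncomputable section

/-- `P(y−1)` with the convention `P(−1) = 0`. -/
def shiftD (P : ℕ → ℝ) : ℕ → ℝ := fun y => if y = 0 then 0 else P (y - 1)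

theorem IsDist.hasSum {P : ℕ → ℝ} (hP : IsDist P) : HasSum P 1 := by
  have hsumm : Summable P := by
    by_contra h
    simpa [tsum_eq_zero_of_not_summable h] using hP.2
  exact hP.2 ▸ hsumm.hasSum

@[simp]
theorem shiftD_zero (P : ℕ → ℝ) : shiftD P 0 = 0 := rfl

@[simp]
theorem shiftD_succ (P : ℕ → ℝ) (y : ℕ) : shiftD P (y + 1) = P y := rfl

theorem hasSum_mul_shiftD {P g : ℕ → ℝ} {a : ℝ} (h : HasSum (fun y => g (y + 1) * P y) a) :
    HasSum (fun y => g y * shiftD P y) a := by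
  simpa using HasSum.zero_add (f := fun y => g y * shiftD P y) (by simpa using h)

theorem hasSum_shiftD {P : ℕ → ℝ} {a : ℝ} (h : HasSum P a) : HasSum (shiftD P) a := by
  simpa using hasSum_mul_shiftD (g := 1) (by simpa using h)

theorem hasSum_natCast_mul_shiftD {P : ℕ → ℝ} {m a : ℝ} (hP : HasSum P a)
    (hmean : HasSum (fun y : ℕ => (y : ℝ) * P y) m) :
    HasSum (fun y : ℕ => (y : ℝ) * shiftD P y) (m + a) :=
  hasSum_mul_shiftD <| by simpa [add_mul] using hmean.add hP

theorem hasSum_sq_mul_of_variance {ι : Type*} {P Y : ι → ℝ} {a m v : ℝ} (hP : HasSum P a)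
    (hmean : HasSum (fun i => Y i * P i) m) (hvar : HasSum (fun i => (Y i - m) ^ 2 * P i) v) :
    HasSum (fun i => Y i ^ 2 * P i) (v + 2 * m * m - m ^ 2 * a) := by
  have hexpand : (fun i => Y i ^ 2 * P i)
      = fun i => (Y i - m) ^ 2 * P i + 2 * m * (Y i * P i) - m ^ 2 * P i :=
    funext fun i => by ring
  rw [hexpand]
  exact (hvar.add (hmean.mul_left (2 * m))).sub (hP.mul_left (m ^ 2))

theorem hasSum_mul_div_sub_sq {ι : Type*} {p a b : ι → ℝ} {A B C : ℝ} (hp : ∀ i, p i ≠ 0)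
    (hA : HasSum (fun i => p i * (a i / p i) ^ 2) A) (hB : HasSum (fun i => b i * a i) B)
    (hC : HasSum (fun i => b i ^ 2 * p i) C) :
    HasSum (fun i => p i * (a i / p i - b i) ^ 2) (A - 2 * B + C) := by
  have hexpand : (fun i => p i * (a i / p i - b i) ^ 2)
      = fun i => p i * (a i / p i) ^ 2 - 2 * (b i * a i) + b i ^ 2 * p i :=
    funext fun i => by field_simp [hp i]; ring
  rw [hexpand]
  exact (hA.sub (hB.mul_left 2)).add hC

/-- When `Q = δ₁`, the Katti-Panjer information equals `λ² I(Y) + (σ² − 2λ)`, where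
`I(Y)` is the Johnstone–MacGibbon discrete Fisher information. -/
theorem kattiPanjer_eq_johnstoneMacGibbon
    (P : ℕ → ℝ) (hP : IsDist P) (hfull : ∀ y, 0 < P y)
    (lam σ2 : ℝ)
    (hmsum : Summable fun y : ℕ => (y : ℝ) * P y)
    (hmean : (∑' y : ℕ, (y : ℝ) * P y) = lam)
    (hvsum : Summable fun y : ℕ => ((y : ℝ) - lam) ^ 2 * P y)
    (hvar : (∑' y : ℕ, ((y : ℝ) - lam) ^ 2 * P y) = σ2)
    (hI : Summable fun y : ℕ => P y * (shiftD P y / P y) ^ 2) :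
    (∑' y : ℕ, P y * (lam * shiftD P y / P y - (y : ℝ)) ^ 2)
      = lam ^ 2 * (∑' y : ℕ, P y * (shiftD P y / P y - 1) ^ 2) + (σ2 - 2 * lam) := by
  have hPne (y : ℕ) : P y ≠ 0 := (hfull y).ne'
  have hP1 := hP.hasSum
  have hM : HasSum (fun y : ℕ => (y : ℝ) * P y) lam := hmean ▸ hmsum.hasSum
  have hV : HasSum (fun y : ℕ => ((y : ℝ) - lam) ^ 2 * P y) σ2 := hvar ▸ hvsum.hasSum
  have hS := hI.hasSum
  have hSY := hasSum_natCast_mul_shiftD hP1 hM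
  have hKattiPanjer := hasSum_mul_div_sub_sq hPne
    (a := fun y => lam * shiftD P y) (b := fun y => (y : ℝ))
    (by simpa only [mul_div_assoc, mul_pow, mul_left_comm] using hS.mul_left (lam ^ 2))
    (by simpa only [mul_left_comm] using hSY.mul_left lam)
    (hasSum_sq_mul_of_variance hP1 hM hV)
  have hFisher := hasSum_mul_div_sub_sq hPne (b := fun _ => 1) hS
    (by simpa only [one_mul] using hasSum_shiftD hP1) (by simpa only [one_pow, one_mul] using hP1)
  rw [hKattiPanjer.tsum_eq, hFisher.tsum_eq]
  ring
end
end
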